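/- arXiv:1710.08872 — 2 statements merged into one kernel-verified Lean document; each statement's English description precedes it below -/
import Mathlib

section
/- Let q be a prime power. The characteristic polynomial over ℂ of the adjacency matrix of the unit-graph on Mat_2(F_q) equals (X − (q⁴ − q³ − q² + q)) · (X − q)^{q⁴ − q³ − q² + q} · (X − (q − q²))^{q³ + q² − q − 1}; equivalently, the spectrum of this graph consists of the eigenvalue q⁴ − q³ − q² + q with multiplicity 1, the eigenvalue q with multiplicity q⁴ − q³ − q² + q, and the eigenvalue q − q² with multiplicity q³ + q² − q − 1. -/
open scoped Classical
open Polynomial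

/-- The unit-graph on `Mat_n(F)`: distinct matrices `A` and `B` are adjacent
if and only if `B - A` is invertible. -/
def unitGraph (n : ℕ) (F : Type) [Field F] [Fintype F] :
    SimpleGraph (Matrix (Fin n) (Fin n) F) where
  Adj A B := A ≠ B ∧ IsUnit (B - A)
  symm := by
    constructor
    intro A B h
    exact ⟨h.1.symm, by rw [← neg_sub]; exact h.2.neg⟩
  loopless := by
    constructor
    intro A h
    exact h.1 rfl

/-!
The unit-graph is the Cayley graph of the additive group of `Mat₂(F_q)` with respect to the
units, so it is diagonalised by the additive characters. These are the maps
`A ↦ ψ(tr(M A))` for a fixed nontrivial character `ψ` of `F_q`, and the eigenvalue of the one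
attached to `M` is `λ_M = ∑_{U invertible} ψ(tr(M U))`. As the units are stable under
`U ↦ Q U P`, `λ_{P M Q} = λ_M` for invertible `P, Q`, so `λ` takes only three values:
`λ_0 = |GL₂(F_q)|`, `λ_1` on the units, and `λ_E` on the nonzero singular matrices, which are all
equivalent to `E = diag(1, 0)`. Orthogonality of characters yields two linear relations. Summing
`λ` over the subgroup `{x e₀ᵀ}`, on which `A ↦ ψ(tr(A U))` is nontrivial for every unit `U`,
gives `|GL₂| + (q² - 1) λ_E = 0`; summing over all matrices gives
`|GL₂| + |GL₂| λ_1 + (q³ + q² - q - 1) λ_E = 0`. Hence `λ_E = q - q²` and `λ_1 = q`.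
-/

open Finset Matrix

theorem Matrix.charpoly_eq_prod_of_mulVec_eq_smul {n ι R : Type*} [Fintype n] [DecidableEq n]
    [Fintype ι] [DecidableEq ι] [CommRing R] (A : Matrix n n R) (b : Module.Basis ι R (n → R))
    (d : ι → R) (h : ∀ i, A *ᵥ b i = d i • b i) : A.charpoly = ∏ i, (X - C (d i)) := by
  have hdiag : LinearMap.toMatrix b b (toLin' A) = diagonal d := by
    ext i j
    by_cases hij : i = j <;> simp [LinearMap.toMatrix_apply, h, hij]
  rw [← charpoly_toLin', ← LinearMap.charpoly_toMatrix _ b, hdiag, charpoly_diagonal]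

@[to_additive]
theorem Finset.prod_ite_ite {α M : Type*} [CommMonoid M] (s : Finset α) (p q : α → Prop)
    [DecidablePred p] [DecidablePred q] (a b c : M) :
    ∏ x ∈ s, (if p x then a else if q x then b else c) =
      a ^ #{x ∈ s | p x} * b ^ #{x ∈ s | ¬p x ∧ q x} * c ^ #{x ∈ s | ¬p x ∧ ¬q x} := by
  rw [prod_ite, prod_const, prod_ite, prod_const, prod_const, filter_filter, filter_filter,
    mul_assoc]

section MonoidWithZero

variable (R : Type*) [MonoidWithZero R] [Nontrivial R] [Fintype R] [DecidableEq R]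

theorem card_filter_ne_zero_isUnit : #{x : R | ¬x = 0 ∧ IsUnit x} = Fintype.card Rˣ := by
  rw [← card_univ, ← card_map ⟨Units.val, Units.val_injective⟩]
  congr 1
  ext x
  simp only [mem_filter, mem_univ, true_and, mem_map, Function.Embedding.coeFn_mk]
  exact ⟨fun h => h.2, fun ⟨u, hu⟩ => ⟨hu ▸ u.ne_zero, u, hu⟩⟩

theorem card_filter_ne_zero_not_isUnit_add :
    #{x : R | ¬x = 0 ∧ ¬IsUnit x} + Fintype.card Rˣ + 1 = Fintype.card R := by
  have h := card_filter_add_card_filter_not (s := univ.filter fun x : R => ¬x = 0) (p := IsUnit)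
  rw [filter_filter, filter_filter, card_filter_ne_zero_isUnit, filter_ne',
    card_erase_of_mem (mem_univ _), card_univ] at h
  have := Fintype.card_pos (α := R)
  omega

end MonoidWithZero

section Cayley

variable {G : Type*} [AddCommGroup G] [Fintype G] [DecidableEq G]

def cayleyMatrix (S : Finset G) : Matrix G G ℂ := of fun x y => if y - x ∈ S then 1 else 0

theorem cayleyMatrix_mulVec_addChar (S : Finset G) (φ : AddChar G ℂ) :
    cayleyMatrix S *ᵥ ⇑φ = (∑ s ∈ S, φ s) • ⇑φ := by
  ext x
  rw [mulVec, dotProduct, ← Equiv.sum_comp (Equiv.addLeft x)]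
  simp [cayleyMatrix, AddChar.map_add_eq_mul, Finset.mul_sum, mul_comm]

theorem charpoly_cayleyMatrix (S : Finset G) :
    (cayleyMatrix S).charpoly = ∏ φ : AddChar G ℂ, (X - C (∑ s ∈ S, φ s)) :=
  charpoly_eq_prod_of_mulVec_eq_smul _ (AddChar.complexBasis G) _ fun φ => by
    simpa using cayleyMatrix_mulVec_addChar S φ

end Cayley

theorem AddChar.sum_apply_dual_eq_zero {K V : Type*} [Field K] [AddCommGroup V] [Module K V]
    [Fintype V] {ψ : AddChar K ℂ} (hψ : ψ ≠ 0) {f : Module.Dual K V} (hf : f ≠ 0) :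
    ∑ v, ψ (f v) = 0 := by
  refine (AddChar.sum_eq_zero_iff_ne_zero (ψ := ψ.compAddMonoidHom f.toAddMonoidHom)).2
    fun h => hψ <| compAddMonoidHom_injective_left f.toAddMonoidHom (LinearMap.surjective hf) ?_
  simp only [h]
  ext
  simp

section TraceChar

variable {F : Type*} [Field F] {n : Type*} [Fintype n] [DecidableEq n]

def traceForm (M : Matrix n n F) : Module.Dual F (Matrix n n F) :=
  traceLinearMap n F F ∘ₗ LinearMap.mulLeft F M

@[simp] theorem traceForm_apply (M A : Matrix n n F) : traceForm M A = trace (M * A) := rfl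

theorem traceForm_ne_zero {M : Matrix n n F} (hM : M ≠ 0) : traceForm M ≠ 0 := by
  contrapose! hM
  exact ext_iff_trace_mul_right.2 fun A => by simpa using LinearMap.congr_fun hM A

variable {ψ : AddChar F ℂ}

variable (ψ) in
def traceChar (M : Matrix n n F) : AddChar (Matrix n n F) ℂ :=
  ψ.compAddMonoidHom (traceForm M).toAddMonoidHom

@[simp] theorem traceChar_apply (M A : Matrix n n F) : traceChar ψ M A = ψ (trace (M * A)) := rfl

variable [Fintype F] [DecidableEq F]

theorem traceChar_injective (hψ : ψ ≠ 0) : Function.Injective (traceChar ψ (n := n)) := by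
  intro M N h
  by_contra hMN
  have hsum := AddChar.sum_apply_dual_eq_zero hψ (traceForm_ne_zero (sub_ne_zero.2 hMN))
  have hone (A : Matrix n n F) : ψ (traceForm (M - N) A) = 1 := by
    rw [traceForm_apply, sub_mul, trace_sub, AddChar.map_sub_eq_div, ← traceChar_apply,
      ← traceChar_apply, h, div_self (AddChar.val_isUnit _ _).ne_zero]
  simp only [hone, sum_const, card_univ, nsmul_eq_mul, mul_one, Nat.cast_eq_zero] at hsum
  exact Fintype.card_ne_zero hsum

theorem traceChar_bijective (hψ : ψ ≠ 0) : Function.Bijective (traceChar ψ (n := n)) :=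
  (Fintype.bijective_iff_injective_and_card _).2 ⟨traceChar_injective hψ, AddChar.card_eq.symm⟩

variable (ψ) in
def unitCharSum (M : Matrix n n F) : ℂ :=
  ∑ U : (Matrix n n F)ˣ, ψ (trace (M * (U : Matrix n n F)))

theorem unitCharSum_zero : unitCharSum ψ (0 : Matrix n n F) = Fintype.card (Matrix n n F)ˣ := by
  simp [unitCharSum]

theorem unitCharSum_mul_mul {P Q : Matrix n n F} (hP : IsUnit P) (hQ : IsUnit Q)
    (M : Matrix n n F) : unitCharSum ψ (P * M * Q) = unitCharSum ψ M := by
  obtain ⟨P, rfl⟩ := hP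
  obtain ⟨Q, rfl⟩ := hQ
  unfold unitCharSum
  rw [← Equiv.sum_comp ((Equiv.mulLeft Q).trans (Equiv.mulRight P))
    fun U => ψ (trace (M * (U : Matrix n n F)))]
  refine Fintype.sum_congr _ _ fun U => ?_
  simp only [Equiv.trans_apply, Equiv.coe_mulLeft, Equiv.coe_mulRight, Units.val_mul,
    Matrix.mul_assoc]
  rw [trace_mul_comm]
  simp only [Matrix.mul_assoc]

theorem unitCharSum_of_isUnit {M : Matrix n n F} (hM : IsUnit M) :
    unitCharSum ψ M = unitCharSum ψ (1 : Matrix n n F) := by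
  simpa using unitCharSum_mul_mul (ψ := ψ) hM isUnit_one 1

theorem sum_unitCharSum (hψ : ψ ≠ 0) [Nonempty n] :
    ∑ M : Matrix n n F, unitCharSum ψ M = 0 := by
  unfold unitCharSum
  rw [sum_comm]
  refine sum_eq_zero fun U _ => ?_
  simpa [trace_mul_comm _ (U : Matrix n n F)] using
    AddChar.sum_apply_dual_eq_zero hψ (traceForm_ne_zero U.ne_zero)

theorem sum_unitCharSum_vecMulVec (hψ : ψ ≠ 0) {y : n → F} (hy : y ≠ 0) :
    ∑ x : n → F, unitCharSum ψ (vecMulVec x y) = 0 := by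
  unfold unitCharSum
  rw [sum_comm]
  refine sum_eq_zero fun U _ => ?_
  set w := y ᵥ* (U : Matrix n n F)
  have hw : w ≠ 0 := fun h =>
    hy (vecMul_injective_of_isUnit U.isUnit (h.trans (zero_vecMul _).symm))
  obtain ⟨i, hi⟩ := Function.ne_iff.1 hw
  have hf : dotProductBilin F F w ≠ 0 := fun h =>
    hi (by simpa using LinearMap.congr_fun h (Pi.single i 1))
  simpa [vecMulVec_mul, dotProduct_comm] using AddChar.sum_apply_dual_eq_zero hψ hf

end TraceChar

section UnitGraph

variable {F : Type} [Field F] [Fintype F]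

theorem unitGraph_adj {n : ℕ} [NeZero n] {A B : Matrix (Fin n) (Fin n) F} :
    (unitGraph n F).Adj A B ↔ IsUnit (B - A) :=
  ⟨And.right, fun h => ⟨by rintro rfl; simp at h, h⟩⟩

variable [DecidableEq F]

theorem adjMatrix_unitGraph_eq_cayleyMatrix (n : ℕ) [NeZero n] :
    (unitGraph n F).adjMatrix ℂ = cayleyMatrix ((univ : Finset (Matrix (Fin n) (Fin n) F)ˣ).map
      ⟨Units.val, Units.val_injective⟩) := by
  ext A B
  simp [SimpleGraph.adjMatrix_apply, cayleyMatrix, unitGraph_adj, IsUnit]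

theorem charpoly_adjMatrix_unitGraph {ψ : AddChar F ℂ} (hψ : ψ ≠ 0) (n : ℕ) [NeZero n] :
    ((unitGraph n F).adjMatrix ℂ).charpoly =
      ∏ M : Matrix (Fin n) (Fin n) F, (X - C (unitCharSum ψ M)) := by
  rw [adjMatrix_unitGraph_eq_cayleyMatrix, charpoly_cayleyMatrix]
  exact (Fintype.prod_bijective _ (traceChar_bijective hψ) _ _ fun M => by
    simp [unitCharSum]).symm

end UnitGraph

theorem Matrix.eq_mul_mul_of_det_eq_zero {F : Type*} [Field F] {M : Matrix (Fin 2) (Fin 2) F}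
    (h00 : M 0 0 ≠ 0) (hdet : M.det = 0) :
    M = !![M 0 0, 0; M 1 0, 1] * !![1, 0; 0, 0] * !![1, M 0 1 / M 0 0; 0, 1] := by
  rw [det_fin_two, sub_eq_zero] at hdet
  rw [mul_fin_two, mul_fin_two, eta_fin_two M]
  simp [field]
  linear_combination hdet

section FinTwo

variable {F : Type*} [Field F] [Fintype F] [DecidableEq F] {ψ : AddChar F ℂ}

local notation "q" => Fintype.card F

theorem card_units_matrix_fin_two_add :
    Fintype.card (Matrix (Fin 2) (Fin 2) F)ˣ + q ^ 3 + q ^ 2 = q ^ 4 + q := by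
  rw [← Nat.card_eq_fintype_card]
  have h1 : 1 ≤ q ^ 2 := Nat.one_le_pow _ _ Fintype.card_pos
  have h2 : q ≤ q ^ 2 := Nat.le_self_pow two_ne_zero q
  simp only [card_GL_field, Fin.prod_univ_two, Fin.val_zero, Fin.val_one, pow_zero, pow_one]
  zify [h1, h2]
  ring

theorem card_nonzero_nonunit_matrix_fin_two_add :
    #{M : Matrix (Fin 2) (Fin 2) F | ¬M = 0 ∧ ¬IsUnit M} + q + 1 = q ^ 3 + q ^ 2 := by
  have h1 := card_filter_ne_zero_not_isUnit_add (Matrix (Fin 2) (Fin 2) F)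
  have h2 := card_units_matrix_fin_two_add (F := F)
  have h3 : Fintype.card (Matrix (Fin 2) (Fin 2) F) = q ^ 4 := by
    show Fintype.card (Fin 2 → Fin 2 → F) = _
    rw [Fintype.card_fun, Fintype.card_fun, Fintype.card_fin]
    ring
  omega

theorem natCast_card_units_matrix_fin_two :
    (Fintype.card (Matrix (Fin 2) (Fin 2) F)ˣ : ℂ) = q ^ 4 - q ^ 3 - q ^ 2 + q := by
  have h : (Fintype.card (Matrix (Fin 2) (Fin 2) F)ˣ : ℂ) + q ^ 3 + q ^ 2 = q ^ 4 + q := by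
    exact_mod_cast card_units_matrix_fin_two_add
  linear_combination h

theorem unitCharSum_eq_of_det_eq_zero {M : Matrix (Fin 2) (Fin 2) F} (hM : M ≠ 0)
    (hdet : M.det = 0) : unitCharSum ψ M = unitCharSum ψ !![1, 0; 0, 0] := by
  have key {P Q : Matrix (Fin 2) (Fin 2) F} (hP : IsUnit P) (hQ : IsUnit Q)
      (h00 : (P * M * Q) 0 0 ≠ 0) : unitCharSum ψ M = unitCharSum ψ !![1, 0; 0, 0] := by
    rw [← unitCharSum_mul_mul hP hQ, eq_mul_mul_of_det_eq_zero h00 (by simp [hdet]),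
      unitCharSum_mul_mul] <;> simp [isUnit_iff_isUnit_det, h00]
  obtain ⟨i, j, hij⟩ : ∃ i j, M i j ≠ 0 := by
    by_contra! h
    exact hM (Matrix.ext h)
  -- swapping the rows and/or the columns moves the entry `M i j` to position `(0, 0)`
  have hS : IsUnit !![(0 : F), 1; 1, 0] := by simp [isUnit_iff_isUnit_det]
  fin_cases i <;> fin_cases j
  · exact key isUnit_one isUnit_one (by simpa using hij)
  · exact key isUnit_one hS (by rw [eta_fin_two M]; simpa [mul_fin_two] using hij)
  · exact key hS isUnit_one (by rw [eta_fin_two M]; simpa [mul_fin_two] using hij)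
  · exact key hS hS (by rw [eta_fin_two M]; simpa [mul_fin_two] using hij)

theorem unitCharSum_of_det_eq_zero (hψ : ψ ≠ 0) {M : Matrix (Fin 2) (Fin 2) F} (hM : M ≠ 0)
    (hdet : M.det = 0) : unitCharSum ψ M = q - q ^ 2 := by
  rw [unitCharSum_eq_of_det_eq_zero hM hdet]
  set b := unitCharSum ψ !![(1 : F), 0; 0, 0]
  have hval (x : Fin 2 → F) : unitCharSum ψ (vecMulVec x (Pi.single 0 1)) =
      b + if x = 0 then (Fintype.card (Matrix (Fin 2) (Fin 2) F)ˣ : ℂ) - b else 0 := by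
    by_cases hx : x = 0
    · simp [hx, unitCharSum_zero]
    · rw [if_neg hx, add_zero]
      refine unitCharSum_eq_of_det_eq_zero (fun h => hx ?_) (by simp [det_fin_two, vecMulVec_apply])
      ext i
      simpa [vecMulVec_apply] using congr_fun (congr_fun h i) 0
  have hsum := sum_unitCharSum_vecMulVec hψ (y := Pi.single (0 : Fin 2) (1 : F)) (by simp)
  simp only [hval, sum_add_distrib, sum_const, sum_ite_eq', mem_univ, if_true, card_univ,
    Fintype.card_fun, Fintype.card_fin, nsmul_eq_mul, Nat.cast_pow,
    natCast_card_units_matrix_fin_two] at hsum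
  have hq : (q : ℂ) ^ 2 - 1 ≠ 0 := by
    rw [sub_ne_zero]
    exact_mod_cast (Nat.one_lt_pow two_ne_zero Fintype.one_lt_card).ne'
  apply mul_left_cancel₀ hq
  linear_combination hsum

theorem unitCharSum_eq_ite (hψ : ψ ≠ 0) (M : Matrix (Fin 2) (Fin 2) F) :
    unitCharSum ψ M = if M = 0 then (q : ℂ) ^ 4 - q ^ 3 - q ^ 2 + q
      else if IsUnit M then unitCharSum ψ (1 : Matrix (Fin 2) (Fin 2) F) else q - q ^ 2 := by
  split_ifs with h0 hU
  · rw [h0, unitCharSum_zero, natCast_card_units_matrix_fin_two]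
  · exact unitCharSum_of_isUnit hU
  · exact unitCharSum_of_det_eq_zero hψ h0 (by simpa [isUnit_iff_isUnit_det] using hU)

theorem unitCharSum_one (hψ : ψ ≠ 0) : unitCharSum ψ (1 : Matrix (Fin 2) (Fin 2) F) = q := by
  have hsum := sum_unitCharSum hψ (n := Fin 2) (F := F)
  rw [Fintype.sum_congr _ _ (unitCharSum_eq_ite hψ), sum_ite_ite, card_filter_ne_zero_isUnit,
    filter_eq', if_pos (mem_univ _), card_singleton] at hsum
  simp only [one_smul, nsmul_eq_mul, natCast_card_units_matrix_fin_two] at hsum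
  have hr : (#{M : Matrix (Fin 2) (Fin 2) F | ¬M = 0 ∧ ¬IsUnit M} : ℂ) + q + 1 =
      q ^ 3 + q ^ 2 := by
    exact_mod_cast card_nonzero_nonunit_matrix_fin_two_add
  have hg : (q : ℂ) ^ 4 - q ^ 3 - q ^ 2 + q ≠ 0 := by
    rw [← natCast_card_units_matrix_fin_two]
    exact Nat.cast_ne_zero.2 Fintype.card_ne_zero
  apply mul_left_cancel₀ hg
  linear_combination hsum - (q - q ^ 2 : ℂ) * hr

theorem prod_X_sub_C_unitCharSum (hψ : ψ ≠ 0) :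
    ∏ M : Matrix (Fin 2) (Fin 2) F, (X - C (unitCharSum ψ M)) =
      (X - C ((q : ℂ) ^ 4 - q ^ 3 - q ^ 2 + q)) *
        (X - C (q : ℂ)) ^ (q ^ 4 - q ^ 3 - q ^ 2 + q) *
        (X - C ((q : ℂ) - q ^ 2)) ^ (q ^ 3 + q ^ 2 - q - 1) := by
  have hval (M : Matrix (Fin 2) (Fin 2) F) : unitCharSum ψ M =
      if M = 0 then (q : ℂ) ^ 4 - q ^ 3 - q ^ 2 + q
      else if IsUnit M then (q : ℂ) else q - q ^ 2 := by
    rw [unitCharSum_eq_ite hψ, unitCharSum_one hψ]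
  simp_rw [hval, apply_ite C, apply_ite (HSub.hSub X)]
  rw [prod_ite_ite, card_filter_ne_zero_isUnit, filter_eq', if_pos (mem_univ _), card_singleton,
    pow_one]
  have hg := card_units_matrix_fin_two_add (F := F)
  have hr := card_nonzero_nonunit_matrix_fin_two_add (F := F)
  have hq : q ^ 3 + q ^ 2 ≤ q ^ 4 := by
    have := Fintype.one_lt_card (α := F)
    nlinarith [Nat.pow_le_pow_right (Fintype.card_pos (α := F)) (by norm_num : 2 ≤ 3)]
  congr 3 <;> omega

end FinTwo

theorem stmt_13 (F : Type) [Field F] [Fintype F] [DecidableEq F] :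
    ((unitGraph 2 F).adjMatrix ℂ).charpoly =
      (X - C ((Fintype.card F : ℂ) ^ 4 - (Fintype.card F : ℂ) ^ 3
          - (Fintype.card F : ℂ) ^ 2 + (Fintype.card F : ℂ))) *
      (X - C ((Fintype.card F : ℂ))) ^
          (Fintype.card F ^ 4 - Fintype.card F ^ 3 - Fintype.card F ^ 2 + Fintype.card F) *
      (X - C ((Fintype.card F : ℂ) - (Fintype.card F : ℂ) ^ 2)) ^
          (Fintype.card F ^ 3 + Fintype.card F ^ 2 - Fintype.card F - 1) := by
  obtain ⟨ψ, hψ⟩ : ∃ ψ : AddChar F ℂ, ψ ≠ 0 :=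
    (AddChar.exists_apply_ne_zero.2 one_ne_zero).imp fun _ h => AddChar.ne_zero_iff.2 ⟨1, h⟩
  rw [charpoly_adjMatrix_unitGraph hψ, prod_X_sub_C_unitCharSum hψ]
end

section
/- Let q be a prime power and n ≥ 2. Every nonzero matrix in Mat_n(F_q) can be written as a sum of two matrices each of determinant 1. -/
/-!
Being a sum of two matrices of determinant 1 is invariant under `M ↦ P * M * Q` with
`det P = det Q = 1` and under simultaneous permutation of rows and columns, so by Gaussian
elimination with transvections it suffices to treat a diagonal matrix `diagonal d` with `d 0 ≠ 0`.
Adding to a diagonal matrix a weighted `n`-cycle `w` changes the determinant only by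
`(-1)^(n-1) ∏ w`. Taking `A = diagonal a + cycle w` and `B = diagonal (d - a) - cycle w` with
`a 0 = d 0` kills the diagonal product of `B`, and `∏ w = -1`, `∏ a = 1 - (-1)^n` make both
determinants equal to 1.
-/

namespace Matrix

variable {R : Type*} [CommRing R]

def weightedCycle {n : ℕ} (w : Fin n → R) : Matrix (Fin n) (Fin n) R :=
  of fun i j => if i = finRotate n j then w j else 0

lemma det_diagonal_add_weightedCycle {m : ℕ} (x w : Fin (m + 2) → R) :
    (diagonal x + weightedCycle w).det = ∏ i, x i + (-1) ^ (m + 1) * ∏ i, w i := by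
  set X := diagonal x + weightedCycle w
  have hX : ∀ i j, X i j = (if i = j then x i else 0) + if i = j + 1 then w j else 0 :=
    fun i j => by simp [X, weightedCycle, diagonal_apply]
  have minor_zero : (X.submatrix Fin.succ Fin.succ).det = ∏ i : Fin (m + 1), x i.succ := by
    rw [det_of_isLowerTriangular]
    · exact Finset.prod_congr rfl fun i _ => by simp [hX]
    · intro i j (hij : i < j)
      have hne : i.succ ≠ j.succ + 1 := fun h => by
        have hval := congrArg Fin.val h
        rw [Fin.val_add_one] at hval
        split_ifs at hval <;> simp at hval; omega
      simp [hX, hij.ne, hne]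
  have minor_last : (X.submatrix Fin.succ Fin.castSucc).det = ∏ i : Fin (m + 1), w i.castSucc := by
    rw [det_of_isUpperTriangular]
    · exact Finset.prod_congr rfl fun i _ => by simp [hX, (Fin.castSucc_lt_succ (i := i)).ne']
    · intro i j (hij : j < i)
      have hne : i.succ ≠ j.castSucc := (Fin.castSucc_lt_succ_iff.2 hij.le).ne'
      simp [hX, hne, hij.ne']
  have hlast : Fin.last (m + 1) ≠ 0 := Fin.last_pos.ne'
  rw [det_succ_row_zero, Fintype.sum_eq_add 0 (Fin.last _) hlast.symm, Fin.succAbove_zero,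
    Fin.succAbove_last, minor_zero, minor_last, Fin.prod_univ_succ x, Fin.prod_univ_castSucc w]
  · simp [hX]
    ring
  · rintro j ⟨hj0, hjl⟩
    have h0 : (0 : Fin (m + 2)) ≠ j + 1 := by
      rw [ne_comm, Ne, ← Fin.last_add_one, add_left_inj]
      exact hjl
    simp [hX, hj0.symm, h0]

lemma weightedCycle_neg {n : ℕ} (w : Fin n → R) : weightedCycle (-w) = -weightedCycle w := by
  ext i j
  by_cases h : i = finRotate n j <;> simp only [weightedCycle, of_apply, neg_apply, h, if_true,
    if_false, Pi.neg_apply, neg_zero]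

section IsSumOfTwoDetOne

variable {ι κ : Type*} [Fintype ι] [DecidableEq ι] [Fintype κ] [DecidableEq κ]

def IsSumOfTwoDetOne (M : Matrix ι ι R) : Prop :=
  ∃ A B : Matrix ι ι R, A.det = 1 ∧ B.det = 1 ∧ M = A + B

lemma IsSumOfTwoDetOne.mul_mul {M P Q : Matrix ι ι R} (hM : M.IsSumOfTwoDetOne)
    (hP : P.det = 1) (hQ : Q.det = 1) : (P * M * Q).IsSumOfTwoDetOne := by
  obtain ⟨A, B, hA, hB, rfl⟩ := hM
  exact ⟨P * A * Q, P * B * Q, by simp [hA, hP, hQ], by simp [hB, hP, hQ],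
    by rw [Matrix.mul_add, Matrix.add_mul]⟩

lemma IsSumOfTwoDetOne.submatrix_equiv {M : Matrix ι ι R} (hM : M.IsSumOfTwoDetOne) (e : κ ≃ ι) :
    (M.submatrix e e).IsSumOfTwoDetOne := by
  obtain ⟨A, B, hA, hB, rfl⟩ := hM
  exact ⟨A.submatrix e e, B.submatrix e e, by rw [det_submatrix_equiv_self, hA],
    by rw [det_submatrix_equiv_self, hB], rfl⟩

end IsSumOfTwoDetOne

variable {F : Type*} [Field F]

lemma isSumOfTwoDetOne_diagonal_of_apply_zero_ne_zero {m : ℕ} (d : Fin (m + 2) → F)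
    (hd : d 0 ≠ 0) : (diagonal d).IsSumOfTwoDetOne := by
  set a : Fin (m + 2) → F := Fin.cons (d 0) (Fin.cons ((1 - (-1) ^ m) / d 0) 1)
  set w : Fin (m + 2) → F := Fin.cons (-1) 1
  refine ⟨diagonal a + weightedCycle w, diagonal (d - a) + weightedCycle (-w), ?_, ?_, ?_⟩
  · rw [det_diagonal_add_weightedCycle]
    simp only [a, w, Fin.prod_cons, Pi.one_apply, Finset.prod_const_one]
    field_simp
    ring
  · rw [det_diagonal_add_weightedCycle, Finset.prod_eq_zero (Finset.mem_univ 0) (by simp [a])]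
    simp only [w, Pi.neg_apply, Finset.prod_neg, Fin.prod_cons, Pi.one_apply,
      Finset.prod_const_one, Finset.card_univ, Fintype.card_fin, zero_add, mul_one,
      mul_neg]
    rw [← pow_add, ← neg_one_mul, ← pow_succ']
    exact Even.neg_one_pow ⟨m + 2, by ring⟩
  · rw [weightedCycle_neg, add_add_add_comm, add_neg_cancel, add_zero, diagonal_add]
    simp

lemma isSumOfTwoDetOne_diagonal {m : ℕ} {d : Fin (m + 2) → F} {k : Fin (m + 2)} (hk : d k ≠ 0) :
    (diagonal d).IsSumOfTwoDetOne := by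
  set e := Equiv.swap 0 k
  have hd : (diagonal (d ∘ e)).IsSumOfTwoDetOne :=
    isSumOfTwoDetOne_diagonal_of_apply_zero_ne_zero _ (by simpa [e] using hk)
  simpa [submatrix_diagonal_equiv, Function.comp_assoc] using hd.submatrix_equiv e.symm

end Matrix

open Matrix

theorem stmt_16_general (F : Type) [Field F] (n : ℕ) (hn : 2 ≤ n)
    (M : Matrix (Fin n) (Fin n) F) (hM : M ≠ 0) :
    ∃ A B : Matrix (Fin n) (Fin n) F, A.det = 1 ∧ B.det = 1 ∧ M = A + B := by
  obtain ⟨m, rfl⟩ : ∃ m, n = m + 2 := ⟨n - 2, by omega⟩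
  obtain ⟨L, L', d, rfl⟩ := Pivot.exists_list_transvec_mul_diagonal_mul_list_transvec M
  obtain ⟨k, hk⟩ : ∃ k, d k ≠ 0 := by
    by_contra! hd
    simp [show d = 0 from funext hd] at hM
  exact (isSumOfTwoDetOne_diagonal hk).mul_mul (TransvectionStruct.det_toMatrix_prod L)
    (TransvectionStruct.det_toMatrix_prod L')

theorem stmt_16 (F : Type) [Field F] [Fintype F] (n : ℕ) (hn : 2 ≤ n)
    (M : Matrix (Fin n) (Fin n) F) (hM : M ≠ 0) :
    ∃ A B : Matrix (Fin n) (Fin n) F, A.det = 1 ∧ B.det = 1 ∧ M = A + B :=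
  stmt_16_general F n hn M hM
end
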